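/- arXiv:2106.11818 — 3 statements merged into one kernel-verified Lean document; each statement's English description precedes it below -/
import Mathlib

section
/- Saturation preserves the diamond property: let (S, Lbl, →) be any labelled transition system over the πMLL label set Lbl. If (S, Lbl, →) enjoys the diamond property, then its saturation (S, Lbl, ⇒) enjoys the diamond property. -/
set_option autoImplicit true

namespace PiMLL

/-! ## Names, types, processes of πMLL -/

abbrev Name := ℕ

/-- Propositions of multiplicative classical linear logic, read as session types. -/
inductive Ty : Type
  | one
  | bot
  | tensor (A B : Ty)
  | parr (A B : Ty)

/-- Duality of types. -/
def Ty.dual : Ty → Ty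
  | .one => .bot
  | .bot => .one
  | .tensor A B => .parr A.dual B.dual
  | .parr A B => .tensor A.dual B.dual

/-- πMLL process terms. -/
inductive Proc : Type
  | nil                                -- 0
  | par (P Q : Proc)                   -- P | Q
  | out (x y : Name) (P : Proc)        -- x[y].P   (y bound)
  | inp (x y : Name) (P : Proc)        -- x(y).P   (y bound)
  | close (x : Name) (P : Proc)        -- x[].P
  | wait (x : Name) (P : Proc)         -- x().P
  | res (x y : Name) (P : Proc)        -- (νxy)P   (x,y bound)

/-- Free names of a process. -/
def Proc.fn : Proc → Finset Name
  | .nil => ∅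
  | .par P Q => P.fn ∪ Q.fn
  | .out x y P => insert x (P.fn \ {y})
  | .inp x y P => insert x (P.fn \ {y})
  | .close x P => insert x P.fn
  | .wait x P => insert x P.fn
  | .res x y P => P.fn \ {x, y}

/-- Name transposition. -/
def swapName (a b n : Name) : Name := if n = a then b else if n = b then a else n

/-- Transposition of two names throughout a process term (including binders). -/
def Proc.swap (a b : Name) : Proc → Proc
  | .nil => .nil
  | .par P Q => .par (P.swap a b) (Q.swap a b)
  | .out x y P => .out (swapName a b x) (swapName a b y) (P.swap a b)
  | .inp x y P => .inp (swapName a b x) (swapName a b y) (P.swap a b)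
  | .close x P => .close (swapName a b x) (P.swap a b)
  | .wait x P => .wait (swapName a b x) (P.swap a b)
  | .res x y P => .res (swapName a b x) (swapName a b y) (P.swap a b)

/-- α-equivalence of processes: least congruence allowing the renaming of bound names. -/
inductive AlphaEq : Proc → Proc → Prop
  | refl (P) : AlphaEq P P
  | symm : AlphaEq P Q → AlphaEq Q P
  | trans : AlphaEq P Q → AlphaEq Q R → AlphaEq P R
  | par : AlphaEq P P' → AlphaEq Q Q' → AlphaEq (.par P Q) (.par P' Q')
  | out : AlphaEq P P' → AlphaEq (.out x y P) (.out x y P')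
  | inp : AlphaEq P P' → AlphaEq (.inp x y P) (.inp x y P')
  | close : AlphaEq P P' → AlphaEq (.close x P) (.close x P')
  | wait : AlphaEq P P' → AlphaEq (.wait x P) (.wait x P')
  | res : AlphaEq P P' → AlphaEq (.res x y P) (.res x y P')
  | outRename : y' ∉ (Proc.out x y P).fn →
      AlphaEq (.out x y P) (.out x y' (P.swap y y'))
  | inpRename : y' ∉ (Proc.inp x y P).fn →
      AlphaEq (.inp x y P) (.inp x y' (P.swap y y'))
  | resRenameFst : x' ∉ (Proc.res x y P).fn → x' ≠ y →
      AlphaEq (.res x y P) (.res x' y (P.swap x x'))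
  | resRenameSnd : y' ∉ (Proc.res x y P).fn → y' ≠ x →
      AlphaEq (.res x y P) (.res x y' (P.swap y y'))

/-! ## Labels -/

/-- Action labels `Act`. -/
inductive Act : Type
  | close (x : Name)       -- x[]
  | wait (x : Name)        -- x()
  | out (x y : Name)       -- x[y]
  | inp (x y : Name)       -- x(y)
  deriving DecidableEq

/-- Free names of an action. -/
def Act.fn : Act → Finset Name
  | .close x => {x}
  | .wait x => {x}
  | .out x _ => {x}
  | .inp x _ => {x}

/-- Bound names of an action. -/
def Act.bn : Act → Finset Name
  | .close _ => ∅
  | .wait _ => ∅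
  | .out _ y => {y}
  | .inp _ y => {y}

/-- Labels `Lbl`: τ, actions, and (unordered) parallel pairs of actions. -/
inductive Lbl : Type
  | tau
  | act (a : Act)
  | sync (p : Sym2 Act)

/-- Free names of a label. -/
def Lbl.fn : Lbl → Finset Name
  | .tau => ∅
  | .act a => a.fn
  | .sync p => Sym2.lift ⟨fun a b => a.fn ∪ b.fn, fun _ _ => Finset.union_comm _ _⟩ p

/-- Bound names of a label. -/
def Lbl.bn : Lbl → Finset Name
  | .tau => ∅
  | .act a => a.bn
  | .sync p => Sym2.lift ⟨fun a b => a.bn ∪ b.bn, fun _ _ => Finset.union_comm _ _⟩ p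

/-- All names of a label. -/
def Lbl.cn (l : Lbl) : Finset Name := l.fn ∪ l.bn

/-! ## The LTS of processes (lts_p) -/

inductive PStep : Proc → Lbl → Proc → Prop
  | out : PStep (.out x y P) (.act (Act.out x y)) P
  | inp : PStep (.inp x y P) (.act (Act.inp x y)) P
  | close : PStep (.close x P) (.act (Act.close x)) P
  | wait : PStep (.wait x P) (.act (Act.wait x)) P
  | parL : PStep P l P' → Disjoint l.bn Q.fn → PStep (.par P Q) l (.par P' Q)
  | parR : PStep Q l Q' → Disjoint l.bn P.fn → PStep (.par P Q) l (.par P Q')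
  | sync : PStep P (.act a) P' → PStep Q (.act b) Q' → Disjoint a.bn b.bn →
      PStep (.par P Q) (.sync s(a, b)) (.par P' Q')
  | res : PStep P l P' → x ∉ l.cn → y ∉ l.cn →
      PStep (.res x y P) l (.res x y P')
  | resOne : PStep P (.sync s(Act.close x, Act.wait y)) P' →
      PStep (.res x y P) .tau P'
  | resTensor : PStep P (.sync s(Act.out x x', Act.inp y y')) P' →
      PStep (.res x y P) .tau (.res x y (.res x' y' P'))
  | alpha : AlphaEq P Q → PStep Q l Q' → PStep P l Q'

/-! ## Environments and hyperenvironments -/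

/-- A typing environment: a finite map from names to types. -/
abbrev Env : Type := Finmap (fun _ : Name => Ty)

/-- A hyperenvironment: a finite (unordered) collection of environments. -/
abbrev HEnv : Type := Multiset Env

/-- The names of an environment. -/
def Env.names (Γ : Env) : Finset Name := Γ.keys

/-- The names of a hyperenvironment. -/
def HEnv.names (G : HEnv) : Finset Name := (G.map Env.names).sup

/-! ## Typing (⊢ P :: G) -/

inductive Typed : Proc → HEnv → Prop
  | nil : Typed .nil 0
  | par {P Q : Proc} {G H : HEnv} :
      Typed P G → Typed Q H → Disjoint (HEnv.names G) (HEnv.names H) →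
      Typed (.par P Q) (G + H)
  | res {P : Proc} {Γ Δ : Env} {G : HEnv} {x y : Name} {A : Ty} :
      x ∉ Γ → y ∉ Δ → Γ.Disjoint Δ →
      Typed P ((Γ.insert x A) ::ₘ (Δ.insert y A.dual) ::ₘ G) →
      Typed (.res x y P) ((Γ ∪ Δ) ::ₘ G)
  | out {P : Proc} {Γ Δ : Env} {x y : Name} {A B : Ty} :
      y ∉ Γ → x ∉ Δ → x ∉ Γ → y ∉ Δ → x ≠ y → Γ.Disjoint Δ →
      Typed P {Γ.insert y A, Δ.insert x B} →
      Typed (.out x y P) {(Γ ∪ Δ).insert x (Ty.tensor A B)}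
  | inp {P : Proc} {Γ : Env} {x y : Name} {A B : Ty} :
      y ∉ Γ → x ∉ Γ → x ≠ y →
      Typed P {(Γ.insert y A).insert x B} →
      Typed (.inp x y P) {Γ.insert x (Ty.parr A B)}
  | close {P : Proc} {x : Name} :
      Typed P 0 → Typed (.close x P) {(∅ : Env).insert x Ty.one}
  | wait {P : Proc} {Γ : Env} {x : Name} :
      x ∉ Γ → Typed P {Γ} → Typed (.wait x P) {Γ.insert x Ty.bot}
  | alpha {P Q : Proc} {G : HEnv} : AlphaEq P Q → Typed Q G → Typed P G

/-- A process is well-typed when it inhabits some hyperenvironment. -/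
def WellTyped (P : Proc) : Prop := ∃ G : HEnv, Typed P G

/-! ## The LTS of environments (lts_e) -/

inductive EStep : HEnv → Lbl → HEnv → Prop
  | tensor {Γ Δ : Env} {x x' : Name} {A B : Ty} :
      x ∉ Γ → x ∉ Δ → x' ∉ Γ → x' ∉ Δ → x' ≠ x → Γ.Disjoint Δ →
      EStep {(Γ ∪ Δ).insert x (Ty.tensor A B)} (.act (Act.out x x'))
        {Γ.insert x B, Δ.insert x' A}
  | parr {Γ : Env} {x x' : Name} {A B : Ty} :
      x ∉ Γ → x' ∉ Γ → x' ≠ x →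
      EStep {Γ.insert x (Ty.parr A B)} (.act (Act.inp x x'))
        {(Γ.insert x B).insert x' A}
  | one {x : Name} : EStep {(∅ : Env).insert x Ty.one} (.act (Act.close x)) 0
  | bot {Γ : Env} {x : Name} :
      x ∉ Γ → EStep {Γ.insert x Ty.bot} (.act (Act.wait x)) {Γ}
  | tau {G : HEnv} : EStep G .tau G
  | parL {G G' H : HEnv} {l : Lbl} : EStep G l G' → EStep (G + H) l (G' + H)
  | parR {G H H' : HEnv} {l : Lbl} : EStep H l H' → EStep (G + H) l (G + H')
  | sync {G G' H H' : HEnv} {a b : Act} :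
      EStep G (.act a) G' → EStep H (.act b) H' →
      EStep (G + H) (.sync s(a, b)) (G' + H')

/-! ## Typing derivations as data -/

/-- Typing derivations of πMLL (the rules of `Typed`, as a `Type`). -/
inductive Der : Proc → HEnv → Type
  | nil : Der .nil 0
  | par {P Q : Proc} {G H : HEnv} :
      Der P G → Der Q H → Disjoint (HEnv.names G) (HEnv.names H) →
      Der (.par P Q) (G + H)
  | res {P : Proc} {Γ Δ : Env} {G : HEnv} {x y : Name} {A : Ty} :
      x ∉ Γ → y ∉ Δ → Γ.Disjoint Δ →
      Der P ((Γ.insert x A) ::ₘ (Δ.insert y A.dual) ::ₘ G) →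
      Der (.res x y P) ((Γ ∪ Δ) ::ₘ G)
  | out {P : Proc} {Γ Δ : Env} {x y : Name} {A B : Ty} :
      y ∉ Γ → x ∉ Δ → x ∉ Γ → y ∉ Δ → x ≠ y → Γ.Disjoint Δ →
      Der P {Γ.insert y A, Δ.insert x B} →
      Der (.out x y P) {(Γ ∪ Δ).insert x (Ty.tensor A B)}
  | inp {P : Proc} {Γ : Env} {x y : Name} {A B : Ty} :
      y ∉ Γ → x ∉ Γ → x ≠ y →
      Der P {(Γ.insert y A).insert x B} →
      Der (.inp x y P) {Γ.insert x (Ty.parr A B)}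
  | close {P : Proc} {x : Name} :
      Der P 0 → Der (.close x P) {(∅ : Env).insert x Ty.one}
  | wait {P : Proc} {Γ : Env} {x : Name} :
      x ∉ Γ → Der P {Γ} → Der (.wait x P) {Γ.insert x Ty.bot}
  | alpha {P Q : Proc} {G : HEnv} : AlphaEq P Q → Der Q G → Der P G

/-- Transport a derivation along an equality of hyperenvironments. -/
def Der.castEnv {P : Proc} {G G' : HEnv} (h : G = G') (D : Der P G) : Der P G' :=
  cast (congrArg (Der P) h) D

/-! ## The LTS of derivations (lts_d) -/

inductive DStep :
    {P : Proc} → {G : HEnv} → {P' : Proc} → {G' : HEnv} →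
    Der P G → Lbl → Der P' G' → Prop
  -- action axioms for the logical rules
  | waitAx {P : Proc} {Γ : Env} {x : Name} (h : x ∉ Γ) (D : Der P {Γ}) :
      DStep (Der.wait h D) (.act (Act.wait x)) D
  | closeAx {P : Proc} {x : Name} (D : Der P 0) :
      DStep (Der.close (x := x) D) (.act (Act.close x)) D
  | outAx {P : Proc} {Γ Δ : Env} {x y : Name} {A B : Ty}
      (h1 : y ∉ Γ) (h2 : x ∉ Δ) (h3 : x ∉ Γ) (h4 : y ∉ Δ) (h5 : x ≠ y)
      (h6 : Γ.Disjoint Δ) (D : Der P {Γ.insert y A, Δ.insert x B}) :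
      DStep (Der.out h1 h2 h3 h4 h5 h6 D) (.act (Act.out x y)) D
  | inpAx {P : Proc} {Γ : Env} {x y : Name} {A B : Ty}
      (h1 : y ∉ Γ) (h2 : x ∉ Γ) (h3 : x ≠ y)
      (D : Der P {(Γ.insert y A).insert x B}) :
      DStep (Der.inp h1 h2 h3 D) (.act (Act.inp x y)) D
  -- parallel composition
  | parL {P Q P' : Proc} {G H G' : HEnv} {l : Lbl}
      (D : Der P G) (E : Der Q H)
      (hd : Disjoint (HEnv.names G) (HEnv.names H))
      (D' : Der P' G') (hd' : Disjoint (HEnv.names G') (HEnv.names H)) :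
      DStep D l D' → Disjoint l.bn Q.fn →
      DStep (Der.par D E hd) l (Der.par D' E hd')
  | parR {P Q Q' : Proc} {G H H' : HEnv} {l : Lbl}
      (D : Der P G) (E : Der Q H)
      (hd : Disjoint (HEnv.names G) (HEnv.names H))
      (E' : Der Q' H') (hd' : Disjoint (HEnv.names G) (HEnv.names H')) :
      DStep E l E' → Disjoint l.bn P.fn →
      DStep (Der.par D E hd) l (Der.par D E' hd')
  | parSync {P Q P' Q' : Proc} {G H G' H' : HEnv} {a b : Act}
      (D : Der P G) (E : Der Q H)
      (hd : Disjoint (HEnv.names G) (HEnv.names H))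
      (D' : Der P' G') (E' : Der Q' H')
      (hd' : Disjoint (HEnv.names G') (HEnv.names H')) :
      DStep D (.act a) D' → DStep E (.act b) E' → Disjoint a.bn b.bn →
      DStep (Der.par D E hd) (.sync s(a, b)) (Der.par D' E' hd')
  -- restriction: propagation of actions not involving the restricted names
  | resProp {P P' : Proc} {Γ Δ Γ' Δ' : Env} {G G' : HEnv} {x y : Name} {A : Ty} {l : Lbl}
      (hx : x ∉ Γ) (hy : y ∉ Δ) (hdj : Γ.Disjoint Δ)
      (D : Der P ((Γ.insert x A) ::ₘ (Δ.insert y A.dual) ::ₘ G))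
      (hx' : x ∉ Γ') (hy' : y ∉ Δ') (hdj' : Γ'.Disjoint Δ')
      (D' : Der P' ((Γ'.insert x A) ::ₘ (Δ'.insert y A.dual) ::ₘ G')) :
      DStep D l D' → x ∉ l.cn → y ∉ l.cn →
      DStep (Der.res hx hy hdj D) l (Der.res hx' hy' hdj' D')
  -- restriction: communication on units
  | resOne {P P' : Proc} {Γ : Env} {G : HEnv} {x y : Name}
      (hx : x ∉ (∅ : Env)) (hy : y ∉ Γ) (hdj : Finmap.Disjoint (∅ : Env) Γ)
      (D : Der P (((∅ : Env).insert x Ty.one) ::ₘ (Γ.insert y Ty.bot) ::ₘ G))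
      (D' : Der P' (Γ ::ₘ G)) :
      DStep D (.sync s(Act.close x, Act.wait y)) D' →
      DStep (Der.res hx hy hdj D) .tau D'
  -- restriction: communication on ⊗/⅋
  | resTensor {P P' : Proc} {Γ Δ Ξ : Env} {G : HEnv} {x y x' y' : Name} {A B : Ty}
      (hx : x ∉ Γ ∪ Δ) (hy : y ∉ Ξ) (hdj : (Γ ∪ Δ).Disjoint Ξ)
      (D : Der P (((Γ ∪ Δ).insert x (Ty.tensor A B)) ::ₘ
                  (Ξ.insert y (Ty.tensor A B).dual) ::ₘ G))
      (hx1 : x' ∉ Δ) (hy1 : y' ∉ Ξ.insert y B.dual)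
      (hdj1 : Δ.Disjoint (Ξ.insert y B.dual))
      (D' : Der P' ((Δ.insert x' A) ::ₘ ((Ξ.insert y B.dual).insert y' A.dual) ::ₘ
                    (Γ.insert x B) ::ₘ G))
      (hx2 : x ∉ Γ) (hy2 : y ∉ Δ ∪ Ξ) (hdj2 : Γ.Disjoint (Δ ∪ Ξ))
      (hEq : ((Δ ∪ Ξ.insert y B.dual) ::ₘ (Γ.insert x B) ::ₘ G)
           = ((Γ.insert x B) ::ₘ ((Δ ∪ Ξ).insert y B.dual) ::ₘ G)) :
      DStep D (.sync s(Act.out x x', Act.inp y y')) D' →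
      DStep (Der.res hx hy hdj D) .tau
        (Der.res hx2 hy2 hdj2 (Der.castEnv hEq (Der.res hx1 hy1 hdj1 D')))
  -- α-equivalence
  | alpha {P Q P' : Proc} {G G' : HEnv} {l : Lbl}
      (hA : AlphaEq P Q) (D : Der P G) (E : Der Q G) (E' : Der P' G') :
      DStep E l E' → DStep D l E'

/-! ## Generic LTS notions: saturation, simulations, bisimilarity -/

/-- Saturation of an LTS. -/
inductive Sat {S : Type u} (st : S → Lbl → S → Prop) : S → Lbl → S → Prop
  | refl (s : S) : Sat st s .tau s
  | step {s₁ s₂ s₃ s₄ : S} {l : Lbl} :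
      Sat st s₁ .tau s₂ → st s₂ l s₃ → Sat st s₃ .tau s₄ → Sat st s₁ l s₄

/-- `R` is a strong forward simulation from `st₁` to `st₂`. -/
def IsSimulation {S₁ : Type u} {S₂ : Type v}
    (st₁ : S₁ → Lbl → S₁ → Prop) (st₂ : S₂ → Lbl → S₂ → Prop)
    (R : S₁ → S₂ → Prop) : Prop :=
  ∀ ⦃s₁ s₂⦄, R s₁ s₂ → ∀ ⦃l s₁'⦄, st₁ s₁ l s₁' → ∃ s₂', st₂ s₂ l s₂' ∧ R s₁' s₂'

/-- `R` is a strong bisimulation for `st₁` and `st₂`. -/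
def IsBisimulation {S₁ : Type u} {S₂ : Type v}
    (st₁ : S₁ → Lbl → S₁ → Prop) (st₂ : S₂ → Lbl → S₂ → Prop)
    (R : S₁ → S₂ → Prop) : Prop :=
  IsSimulation st₁ st₂ R ∧ IsSimulation st₂ st₁ (fun s₂ s₁ => R s₁ s₂)

/-- Strong similarity ≲ (largest strong forward simulation). -/
def StrongSimilar {S₁ : Type u} {S₂ : Type v}
    (st₁ : S₁ → Lbl → S₁ → Prop) (st₂ : S₂ → Lbl → S₂ → Prop)
    (s₁ : S₁) (s₂ : S₂) : Prop :=
  ∃ R, IsSimulation st₁ st₂ R ∧ R s₁ s₂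

/-- Strong bisimilarity ~ (largest strong bisimulation). -/
def StrongBisimilar {S₁ : Type u} {S₂ : Type v}
    (st₁ : S₁ → Lbl → S₁ → Prop) (st₂ : S₂ → Lbl → S₂ → Prop)
    (s₁ : S₁) (s₂ : S₂) : Prop :=
  ∃ R, IsBisimulation st₁ st₂ R ∧ R s₁ s₂

/-- Similarity ⪅: strong similarity between the saturations. -/
def Similar {S₁ : Type u} {S₂ : Type v}
    (st₁ : S₁ → Lbl → S₁ → Prop) (st₂ : S₂ → Lbl → S₂ → Prop)
    (s₁ : S₁) (s₂ : S₂) : Prop :=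
  StrongSimilar (Sat st₁) (Sat st₂) s₁ s₂

/-- Bisimilarity ≈: strong bisimilarity between the saturations. -/
def Bisimilar {S₁ : Type u} {S₂ : Type v}
    (st₁ : S₁ → Lbl → S₁ → Prop) (st₂ : S₂ → Lbl → S₂ → Prop)
    (s₁ : S₁) (s₂ : S₂) : Prop :=
  StrongBisimilar (Sat st₁) (Sat st₂) s₁ s₂

/-! ## Properties of LTSs -/

/-- The diamond property. -/
def Diamond {S : Type u} (st : S → Lbl → S → Prop) : Prop :=
  ∀ ⦃s : S⦄ ⦃l₁ l₂ : Lbl⦄ ⦃s₁ s₂ : S⦄, Disjoint l₁.fn l₂.fn →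
    st s l₁ s₁ → st s l₂ s₂ → ∃ s₃, st s₁ l₂ s₃ ∧ st s₂ l₁ s₃

/-- Serialisation. -/
def Serialises {S : Type u} (st : S → Lbl → S → Prop) : Prop :=
  ∀ ⦃s s' : S⦄ ⦃a₁ a₂ : Act⦄, Disjoint (Lbl.act a₁).fn (Lbl.act a₂).fn →
    st s (.sync s(a₁, a₂)) s' → ∃ s'', st s (.act a₁) s'' ∧ st s'' (.act a₂) s'

/-- Non-interference. -/
def NonInterference {S : Type u} (st : S → Lbl → S → Prop) : Prop :=
  ∀ ⦃s : S⦄ ⦃a₁ a₂ : Act⦄, Disjoint (Lbl.act a₁).fn (Lbl.act a₂).fn →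
    (∃ t₁, st s (.act a₁) t₁) → (∃ t₂, st s (.act a₂) t₂) →
    ∃ t₃, st s (.sync s(a₁, a₂)) t₃

/-! ## Disentanglement -/

/-- One step of the disentanglement rewriting (closed under arbitrary contexts). -/
inductive DisStep : Proc → Proc → Prop
  | parNil (P) : DisStep (.par P .nil) P
  | resParL : x ∉ Proc.fn Q → y ∉ Proc.fn Q →
      DisStep (.res x y (.par P Q)) (.par (.res x y P) Q)
  | resParR : x ∉ Proc.fn P → y ∉ Proc.fn P →
      DisStep (.res x y (.par P Q)) (.par P (.res x y Q))
  | congParL : DisStep P P' → DisStep (.par P Q) (.par P' Q)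
  | congParR : DisStep Q Q' → DisStep (.par P Q) (.par P Q')
  | congOut : DisStep P P' → DisStep (.out x y P) (.out x y P')
  | congInp : DisStep P P' → DisStep (.inp x y P) (.inp x y P')
  | congClose : DisStep P P' → DisStep (.close x P) (.close x P')
  | congWait : DisStep P P' → DisStep (.wait x P) (.wait x P')
  | congRes : DisStep P P' → DisStep (.res x y P) (.res x y P')

/-- `Q` is the disentanglement of `P`: a normal form of the rewriting reachable from `P`. -/
def Disentanglement (P Q : Proc) : Prop :=
  Relation.ReflTransGen DisStep P Q ∧ ∀ R, ¬ DisStep Q R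

/-- Parallel composition of a list of processes, `P₁ | ⋯ | Pₙ`. -/
def parList : List Proc → Proc
  | [] => .nil
  | [P] => P
  | P :: Q :: rest => .par P (parList (Q :: rest))

/-! ## (Pre)congruence closure conditions -/

/-- A relation on processes is closed under all syntactic constructs of πMLL. -/
def ClosedUnderContexts (R : Proc → Proc → Prop) : Prop :=
  (∀ P Q R', R P Q → R (.par P R') (.par Q R')) ∧
  (∀ P Q R', R P Q → R (.par R' P) (.par R' Q)) ∧
  (∀ P Q x y, R P Q → R (.out x y P) (.out x y Q)) ∧
  (∀ P Q x y, R P Q → R (.inp x y P) (.inp x y Q)) ∧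
  (∀ P Q x, R P Q → R (.close x P) (.close x Q)) ∧
  (∀ P Q x, R P Q → R (.wait x P) (.wait x Q)) ∧
  (∀ P Q x y, R P Q → R (.res x y P) (.res x y Q))


private lemma tau_fn_disjoint_left (l : Lbl) : Disjoint (Lbl.tau).fn l.fn := by
  simp [Lbl.fn]

private lemma sat_append {S : Type*} {st : S → Lbl → S → Prop} :
    ∀ {a b : S} {l : Lbl}, Sat st a l b → ∀ {c : S}, Sat st b .tau c → Sat st a l c := by
  intro a b l h
  induction h with
  | refl s => intro c h2; exact h2
  | step h1 h2 _ _ ih3 => intro c h4; exact Sat.step h1 h2 (ih3 h4)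

private lemma sat_prepend {S : Type*} {st : S → Lbl → S → Prop} :
    ∀ {b c : S} {l : Lbl}, Sat st b l c → ∀ {a : S}, Sat st a .tau b → Sat st a l c := by
  intro b c l h
  induction h with
  | refl s => intro a h1; exact h1
  | step h1 h2 h3 ih1 _ => intro a h4; exact Sat.step (ih1 h4) h2 h3

/-- A single step commutes with a τ-chain. -/
private lemma step_comm_tauchain {S : Type*} {st : S → Lbl → S → Prop}
    (hd : Diamond st) :
    ∀ {s s₂ : S} {l₀ : Lbl}, Sat st s l₀ s₂ → l₀ = .tau → ∀ {l : Lbl} {s₁ : S}, st s l s₁ →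
      ∃ s₃, Sat st s₁ .tau s₃ ∧ st s₂ l s₃ := by
  intro s s₂ l₀ h
  induction h with
  | refl s => intro _ l s₁ h1; exact ⟨s₁, Sat.refl _, h1⟩
  | step h1 h2 h3 ih1 ih3 =>
      intro hl l s₁ hstep
      subst hl
      obtain ⟨t, ht1, ht2⟩ := ih1 rfl hstep
      obtain ⟨u, hu1, hu2⟩ := hd (tau_fn_disjoint_left l).symm ht2 h2
      obtain ⟨v, hv1, hv2⟩ := ih3 rfl hu2
      exact ⟨v, sat_append ht1 (Sat.step (Sat.refl _) hu1 hv1), hv2⟩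

/-- Two τ-chains from the same state converge. -/
private lemma tauchain_conv {S : Type*} {st : S → Lbl → S → Prop}
    (hd : Diamond st) :
    ∀ {s a₁ : S} {l₀ : Lbl}, Sat st s l₀ a₁ → l₀ = .tau → ∀ {a₂ : S}, Sat st s .tau a₂ →
      ∃ c, Sat st a₁ .tau c ∧ Sat st a₂ .tau c := by
  intro s a₁ l₀ h
  induction h with
  | refl s => intro _ a₂ h2; exact ⟨a₂, h2, Sat.refl _⟩
  | step h1 h2 h3 ih1 ih3 =>
      intro hl a₂ h4
      subst hl
      obtain ⟨c₀, hc1, hc2⟩ := ih1 rfl h4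
      obtain ⟨c₁, hd1, hd2⟩ := step_comm_tauchain hd hc1 rfl h2
      obtain ⟨c₂, he1, he2⟩ := ih3 rfl hd1
      exact ⟨c₂, he1, sat_append hc2 (Sat.step (Sat.refl _) hd2 he2)⟩

/-- **Saturation preserves the diamond property**: if an LTS over the πMLL labels enjoys
the diamond property, then so does its saturation. -/
theorem saturation_preserves_diamond {S : Type*} (st : S → Lbl → S → Prop) :
    Diamond st → Diamond (Sat st) := by
  intro hd s l₁ l₂ s₁ s₂ hdisj h1 h2
  cases h1 with
  | refl => exact ⟨s₂, h2, Sat.refl _⟩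
  | step ha1 hb1 hc1 =>
      cases h2 with
      | refl => exact ⟨s₁, Sat.refl _, Sat.step ha1 hb1 hc1⟩
      | step ha2 hb2 hc2 =>
          -- commute the initial τ-chains
          obtain ⟨c, hc1', hc2'⟩ := tauchain_conv hd ha1 rfl ha2
          obtain ⟨d₁, hd11, hd12⟩ := step_comm_tauchain hd hc1' rfl hb1
          obtain ⟨d₂, hd21, hd22⟩ := step_comm_tauchain hd hc2' rfl hb2
          obtain ⟨e, he1, he2⟩ := hd hdisj hd12 hd22
          obtain ⟨f₁, hf11, hf12⟩ := tauchain_conv hd hd11 rfl hc1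
          obtain ⟨f₂, hf21, hf22⟩ := tauchain_conv hd hd21 rfl hc2
          obtain ⟨g₁, hg11, hg12⟩ := step_comm_tauchain hd hf11 rfl he1
          obtain ⟨g₂, hg21, hg22⟩ := step_comm_tauchain hd hf21 rfl he2
          obtain ⟨h, hh1, hh2⟩ := tauchain_conv hd hg11 rfl hg21
          exact ⟨h, Sat.step hf12 hg12 hh1, Sat.step hf22 hg22 hh2⟩

end PiMLL
end

section
/- τ-transitions preserve bisimilarity under the diamond property: let (S, Lbl, →) be a labelled transition system over the πMLL label set that enjoys the diamond property. If s →τ s', then s ≈ s', i.e., s and s' are bisimilar. -/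
set_option autoImplicit true

namespace PiMLL

private lemma sat_tau_trans {S : Type*} {st : S → Lbl → S → Prop} {a b b' : S} {l : Lbl}
    (h : st a .tau b) (hs : Sat st b l b') : Sat st a l b' := by
  induction hs with
  | refl s => exact Sat.step (Sat.refl a) h (Sat.refl s)
  | step h1 h2 h3 ih =>
    exact Sat.step (ih h) h2 h3

private lemma push_tau {S : Type*} {st : S → Lbl → S → Prop} (hd : Diamond st)
    {a a' : S} {l : Lbl} (hs : Sat st a l a') :
    ∀ b, st a .tau b → ∃ b', Sat st b l b' ∧ (a' = b' ∨ st a' .tau b') := by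
  induction hs with
  | refl s => exact fun b hb => ⟨b, Sat.refl b, Or.inr hb⟩
  | step h1 h2 h3 ih1 ih2 =>
    intro b hb
    obtain ⟨b₂, hb₂, hr⟩ := ih1 b hb
    rcases hr with rfl | htau
    · exact ⟨_, Sat.step hb₂ h2 h3, Or.inl rfl⟩
    · obtain ⟨c, hc1, hc2⟩ := hd (by simp [Lbl.fn]) htau h2
      obtain ⟨b₄, hb₄, hr₄⟩ := ih2 c hc2
      exact ⟨b₄, Sat.step hb₂ hc1 hb₄, hr₄⟩

/-- **τ-transitions preserve bisimilarity under the diamond property**: in any LTS over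
the πMLL labels enjoying the diamond property, a τ-transition relates bisimilar states. -/
theorem tau_bisimilar_of_diamond {S : Type*} (st : S → Lbl → S → Prop) :
    Diamond st → ∀ s s' : S, st s .tau s' → Bisimilar st st s s' := by
  intro hd s s' hst
  refine ⟨fun a b => a = b ∨ st a .tau b, ⟨?_, ?_⟩, Or.inr hst⟩
  · rintro a b (rfl | htau) l a' hs
    · exact ⟨a', hs, Or.inl rfl⟩
    · exact push_tau hd hs b htau
  · rintro b a (rfl | htau) l b' hs
    · exact ⟨b', hs, Or.inl rfl⟩
    · exact ⟨b', sat_tau_trans htau hs, Or.inl rfl⟩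

end PiMLL
end

section
/- Saturation preserves serialisation: let (S, Lbl, →) be any labelled transition system over the πMLL label set Lbl. If (S, Lbl, →) enjoys serialisation, then its saturation (S, Lbl, ⇒) enjoys serialisation. -/
set_option autoImplicit true

namespace PiMLL

/-- **Saturation preserves serialisation**: if an LTS over the πMLL labels enjoys
serialisation, then so does its saturation. -/
theorem saturation_preserves_serialisation {S : Type*} (st : S → Lbl → S → Prop) :
    Serialises st → Serialises (Sat st) := by
  intro hser s s' a₁ a₂ hdisj hstep
  cases hstep with
  | step h1 h2 h3 =>
    obtain ⟨t, ht1, ht2⟩ := hser hdisj h2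
    exact ⟨t, Sat.step h1 ht1 (Sat.refl t), Sat.step (Sat.refl t) ht2 h3⟩

end PiMLL
end
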